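/- arXiv:1709.06962 — 2 statements merged into one kernel-verified Lean document; each statement's English description precedes it below -/
import Mathlib

section
/- Let n ≥ 1 and k ≥ 0. The operator norm of Jq^k on (ℚ₂[ξ₁,…,ξₙ], ‖·‖₂) equals 1: for every f ∈ ℚ₂[ξ₁,…,ξₙ] one has ‖Jq^k(f)‖₂ ≤ ‖f‖₂, and there exists a nonzero f with ‖Jq^k(f)‖₂ = ‖f‖₂ (indeed Jq^k(ξ₁^k) = ξ₁^{2k}). -/
/-!
`Jq^k` is defined over `ℤ` and commutes with base change, so it sends every monomial to a
polynomial with integer, hence `2`-adically integral, coefficients; writing `f` as a sum of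
monomials, the ultrametric inequality gives `‖Jq^k f‖₂ ≤ ‖f‖₂`. Equality at `ξ₁^k` holds because
the `t^k`-coefficient of `(ξ₁ + ξ₁² t)^k` is `ξ₁^{2k}`.
-/

open MvPolynomial

/-- Total dyadic Steenrod square with a formal variable `t` recording the degree shift:
`ξᵢ ↦ ξᵢ + ξᵢ²·t`.  For a homogeneous `f` of degree `d`, the coefficient of `t^k`
is exactly the homogeneous component of degree `d + k` of the image of `f` under the
algebra endomorphism `ξᵢ ↦ ξᵢ + ξᵢ²`. -/
noncomputable def JqT (R : Type) [CommRing R] (n : ℕ) :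
    MvPolynomial (Fin n) R →ₐ[R] Polynomial (MvPolynomial (Fin n) R) :=
  aeval fun i : Fin n => Polynomial.C (X i) + Polynomial.C (X i ^ 2) * Polynomial.X

/-- The `k`-th (dyadic, for `R = ℤ_[2]`) Steenrod square `Jq^k`, as an `R`-linear
endomorphism of `R[ξ₁,…,ξₙ]`: it sends a homogeneous polynomial of degree `d` to the
homogeneous component of degree `d + k` of its image under the algebra endomorphism
`ξᵢ ↦ ξᵢ + ξᵢ²`. -/
noncomputable def Jq (R : Type) [CommRing R] (n : ℕ) (k : ℕ) :
    MvPolynomial (Fin n) R →ₗ[R] MvPolynomial (Fin n) R :=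
  (LinearMap.restrictScalars R (Polynomial.lcoeff (MvPolynomial (Fin n) R) k)).comp
    (JqT R n).toLinearMap

/-- The Gauss norm of a polynomial over `ℚ₂`: the maximum of the `2`-adic absolute
values of its coefficients. -/
noncomputable def gaussNorm {n : ℕ} (f : MvPolynomial (Fin n) ℚ_[2]) : NNReal :=
  f.support.sup fun J => ‖coeff J f‖₊

theorem Polynomial.coeff_linear_pow_self {R : Type*} [CommSemiring R] (a b : R) (k : ℕ) :
    ((Polynomial.C a + Polynomial.C b * Polynomial.X) ^ k).coeff k = b ^ k := by
  have hdeg : (Polynomial.C a + Polynomial.C b * Polynomial.X).natDegree ≤ 1 := by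
    rw [add_comm]; exact Polynomial.natDegree_linear_le
  simpa using Polynomial.coeff_pow_of_natDegree_le (m := k) hdeg

section Jq

variable {R S : Type} [CommRing R] [CommRing S] {n : ℕ}

theorem Jq_apply (k : ℕ) (f : MvPolynomial (Fin n) R) :
    Jq R n k f = (JqT R n f).coeff k :=
  rfl

theorem Jq_X_pow (i : Fin n) (k : ℕ) : Jq R n k (X i ^ k) = X i ^ (2 * k) := by
  rw [Jq_apply, map_pow, JqT, aeval_X, Polynomial.coeff_linear_pow_self, ← pow_mul]

theorem JqT_map (φ : R →+* S) (f : MvPolynomial (Fin n) R) :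
    JqT S n (map φ f) = (JqT R n f).map (map φ) := by
  induction f using MvPolynomial.induction_on with
  | C a => simp [JqT]
  | add p q hp hq => simp [hp, hq, Polynomial.map_add]
  | mul_X p i hp =>
    rw [map_mul, map_X, map_mul, map_mul, hp, Polynomial.map_mul]
    simp [JqT, Polynomial.map_add, Polynomial.map_mul]

theorem Jq_map (φ : R →+* S) (k : ℕ) (f : MvPolynomial (Fin n) R) :
    Jq S n k (map φ f) = map φ (Jq R n k f) := by
  rw [Jq_apply, Jq_apply, JqT_map, Polynomial.coeff_map]

end Jq

section gaussNorm

variable {n : ℕ}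

theorem nnnorm_coeff_le_gaussNorm (f : MvPolynomial (Fin n) ℚ_[2]) (J : Fin n →₀ ℕ) :
    ‖coeff J f‖₊ ≤ gaussNorm f := by
  by_cases hJ : J ∈ f.support
  · exact Finset.le_sup (f := fun J => ‖coeff J f‖₊) hJ
  · simp [notMem_support_iff.mp hJ]

theorem gaussNorm_le_iff {f : MvPolynomial (Fin n) ℚ_[2]} {c : NNReal} :
    gaussNorm f ≤ c ↔ ∀ J, ‖coeff J f‖₊ ≤ c :=
  ⟨fun h J => (nnnorm_coeff_le_gaussNorm f J).trans h,
    fun h => Finset.sup_le fun J _ => h J⟩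

theorem gaussNorm_monomial (s : Fin n →₀ ℕ) (a : ℚ_[2]) :
    gaussNorm (monomial s a) = ‖a‖₊ := by
  classical
  by_cases ha : a = 0
  · simp [ha, gaussNorm]
  · simp [gaussNorm, support_monomial, ha]

theorem gaussNorm_X_pow (i : Fin n) (m : ℕ) :
    gaussNorm (X i ^ m : MvPolynomial (Fin n) ℚ_[2]) = 1 := by
  rw [X_pow_eq_monomial, gaussNorm_monomial, nnnorm_one]

theorem gaussNorm_apply_le_of_monomial
    (L : MvPolynomial (Fin n) ℚ_[2] →ₗ[ℚ_[2]] MvPolynomial (Fin n) ℚ_[2])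
    (hL : ∀ M J, ‖coeff J (L (monomial M 1))‖₊ ≤ 1) (f : MvPolynomial (Fin n) ℚ_[2]) :
    gaussNorm (L f) ≤ gaussNorm f := by
  have hf : L f = ∑ M ∈ f.support, coeff M f • L (monomial M 1) := by
    conv_lhs => rw [f.as_sum]
    simp only [map_sum, ← map_smul, smul_eq_mul, mul_one]
  refine gaussNorm_le_iff.mpr fun J => ?_
  rw [hf, coeff_sum]
  refine IsUltrametricDist.nnnorm_sum_le_of_forall_le fun M _ => ?_
  calc ‖coeff J (coeff M f • L (monomial M 1))‖₊
      = ‖coeff M f‖₊ * ‖coeff J (L (monomial M 1))‖₊ := by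
        rw [coeff_smul, smul_eq_mul, nnnorm_mul]
    _ ≤ gaussNorm f * 1 := mul_le_mul' (nnnorm_coeff_le_gaussNorm f M) (hL M J)
    _ = gaussNorm f := mul_one _

end gaussNorm

theorem nnnorm_coeff_Jq_monomial_one_le {n : ℕ} (k : ℕ) (M J : Fin n →₀ ℕ) :
    ‖coeff J (Jq ℚ_[2] n k (monomial M 1))‖₊ ≤ 1 := by
  have hM : monomial M (1 : ℚ_[2]) = map (Int.castRingHom ℚ_[2]) (monomial M 1) := by
    simp
  rw [hM, Jq_map, coeff_map, ← NNReal.coe_le_coe]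
  exact Padic.norm_int_le_one _

theorem gaussNorm_Jq_le {n : ℕ} (k : ℕ) (f : MvPolynomial (Fin n) ℚ_[2]) :
    gaussNorm (Jq ℚ_[2] n k f) ≤ gaussNorm f :=
  gaussNorm_apply_le_of_monomial _ (nnnorm_coeff_Jq_monomial_one_le k) f

/-- The operator norm of `Jq^k` on `(ℚ₂[ξ₁,…,ξₙ], ‖·‖₂)` equals `1`: it is bounded
by `1`, and the bound is attained at a nonzero polynomial (indeed
`Jq^k(ξ₁^k) = ξ₁^{2k}`). -/
theorem jq_operator_norm_one (n : ℕ) (hn : 1 ≤ n) (k : ℕ) :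
    (∀ f : MvPolynomial (Fin n) ℚ_[2], gaussNorm (Jq ℚ_[2] n k f) ≤ gaussNorm f) ∧
    (∃ f : MvPolynomial (Fin n) ℚ_[2], f ≠ 0 ∧ gaussNorm (Jq ℚ_[2] n k f) = gaussNorm f) ∧
    Jq ℚ_[2] n k (X (⟨0, hn⟩ : Fin n) ^ k) = X (⟨0, hn⟩ : Fin n) ^ (2 * k) := by
  refine ⟨gaussNorm_Jq_le k, ⟨X ⟨0, hn⟩ ^ k, pow_ne_zero _ (X_ne_zero _), ?_⟩, Jq_X_pow _ k⟩
  rw [Jq_X_pow, gaussNorm_X_pow, gaussNorm_X_pow]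
end

section
/- Let n ≥ 1. For every k ≥ 1 there exists a positive integer m such that for all f ∈ ℤ₂[ξ₁,…,ξₙ], the m-fold composite (Jq^k)^m(f) has all its coefficients in 2ℤ₂; i.e., (Jq^k)^m maps ℤ₂[ξ₁,…,ξₙ] into 2·ℤ₂[ξ₁,…,ξₙ]. -/
open MvPolynomial

namespace Polynomial

theorem coeff_prod_eq_sum_finsuppAntidiag {R ι : Type*} [CommSemiring R]
    [DecidableEq ι] (f : ι → Polynomial R) (s : Finset ι) (d : ℕ) :
    (∏ i ∈ s, f i).coeff d = ∑ l ∈ s.finsuppAntidiag d, ∏ i ∈ s, (f i).coeff (l i) := by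
  simp_rw [← Polynomial.coeff_coe, ← Polynomial.coeToPowerSeries.ringHom_apply, map_prod]
  exact PowerSeries.coeff_prod _ d s

theorem coeff_C_add_C_sq_mul_X_pow {R : Type*} [CommSemiring R] (x : R) (e j : ℕ) :
    ((C x + C (x ^ 2) * X) ^ e).coeff j = e.choose j * x ^ (e + j) := by
  have hterm (m : ℕ) (hm : m ∈ Finset.range (e + 1)) :
      ((C (x ^ 2) * X) ^ m * C x ^ (e - m) * (e.choose m : Polynomial R)).coeff j =
        if j = m then e.choose m * x ^ (e + m) else 0 := by
    rw [Finset.mem_range] at hm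
    rw [← coeff_C_mul_X_pow, show e + m = 2 * m + (e - m) by omega, pow_add, pow_mul]
    simp only [map_mul, map_pow, map_natCast]
    ring_nf
  rw [add_comm, add_pow, finsetSum_coeff, Finset.sum_congr rfl hterm, Finset.sum_ite_eq]
  split_ifs with h
  · rfl
  · simp [Nat.choose_eq_zero_of_lt (by simpa using h : e < j)]

end Polynomial

theorem MvPolynomial.monomial_eq_C_mul_prod_X_pow {R σ : Type*} [CommSemiring R] [Fintype σ]
    (s : σ →₀ ℕ) (a : R) : monomial s a = C a * ∏ i, X i ^ s i := by
  rw [monomial_eq, Finsupp.prod_fintype _ _ fun _ => pow_zero _]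

theorem PadicInt.dvd_iff_toZMod_eq_zero {p : ℕ} [Fact p.Prime] (x : ℤ_[p]) :
    (p : ℤ_[p]) ∣ x ↔ PadicInt.toZMod x = 0 := by
  rw [← RingHom.mem_ker, PadicInt.ker_toZMod, PadicInt.maximalIdeal_eq_span_p,
    Ideal.mem_span_singleton]

theorem Nat.odd_choose_iff_mod_two_and_div_two (e j : ℕ) :
    Odd (e.choose j) ↔ Odd ((e % 2).choose (j % 2)) ∧ Odd ((e / 2).choose (j / 2)) := by
  have : Fact (Nat.Prime 2) := ⟨Nat.prime_two⟩
  rw [← Nat.odd_mul, Nat.odd_iff, Nat.odd_iff,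
    Choose.choose_modEq_choose_mod_mul_choose_div_nat (p := 2)]

def bitReverse : ℕ → ℕ → ℕ
  | 0, _ => 0
  | T + 1, x => x % 2 * 2 ^ T + bitReverse T (x / 2)

theorem bitReverse_lt (T x : ℕ) : bitReverse T x < 2 ^ T := by
  induction T generalizing x with
  | zero => simp [bitReverse]
  | succ T ih =>
    have := ih (x / 2)
    have := Nat.mul_le_mul_right (2 ^ T) (show x % 2 ≤ 1 by omega)
    rw [bitReverse, pow_succ]
    omega

theorem bitReverse_add_lt {T e j : ℕ} (hj : j ≠ 0) (hjT : j < 2 ^ T)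
    (hodd : Odd (e.choose j)) : bitReverse T (e + j) < bitReverse T e := by
  induction T generalizing e j with
  | zero => omega
  | succ T ih =>
    rw [Nat.odd_choose_iff_mod_two_and_div_two] at hodd
    obtain ⟨hlow, hhigh⟩ := hodd
    simp only [bitReverse]
    rcases Nat.mod_two_eq_zero_or_one j with hj2 | hj2
    · -- no carry out of the lowest bit: the claim for `e / 2` and `j / 2` shifts up by one bit
      have := ih (e := e / 2) (j := j / 2) (by omega) (by rw [pow_succ] at hjT; omega) hhigh
      rw [show (e + j) % 2 = e % 2 by omega, show (e + j) / 2 = e / 2 + j / 2 by omega]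
      omega
    · -- both lowest bits are `1`, so the leading bit of the reversal drops from `1` to `0`
      have he2 : e % 2 = 1 := by
        rcases Nat.mod_two_eq_zero_or_one e with he2 | he2
        · simp [he2, hj2] at hlow
        · exact he2
      have := bitReverse_lt T ((e + j) / 2)
      rw [show (e + j) % 2 = 0 by omega, he2]
      omega

section bitPotential

variable {σ : Type*} [Fintype σ]

def bitPotential (T : ℕ) (E : σ →₀ ℕ) : ℕ := ∑ i, bitReverse T (E i)

theorem bitPotential_le (T : ℕ) (E : σ →₀ ℕ) :
    bitPotential T E ≤ Fintype.card σ * (2 ^ T - 1) := by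
  simpa [bitPotential] using Finset.sum_le_card_nsmul Finset.univ (fun i => bitReverse T (E i))
    (2 ^ T - 1) fun i _ => Nat.le_sub_one_of_lt (bitReverse_lt T (E i))

theorem bitPotential_add_lt {T : ℕ} {E d : σ →₀ ℕ} (hd : d ≠ 0) (hdT : ∀ i, d i < 2 ^ T)
    (hodd : ∀ i, Odd ((E i).choose (d i))) : bitPotential T (E + d) < bitPotential T E := by
  obtain ⟨i₀, hi₀⟩ := Finsupp.ne_iff.mp hd
  refine Finset.sum_lt_sum (fun i _ => ?_) ⟨i₀, Finset.mem_univ _,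
    bitReverse_add_lt hi₀ (hdT i₀) (hodd i₀)⟩
  rcases eq_or_ne (d i) 0 with h | h
  · simp [h]
  · exact (bitReverse_add_lt h (hdT i) (hodd i)).le

end bitPotential

theorem jqT_monomial (R : Type) [CommRing R] (n : ℕ) (E : Fin n →₀ ℕ) (c : R) :
    JqT R n (monomial E c) =
      Polynomial.C (C c) *
        ∏ i, (Polynomial.C (X i) + Polynomial.C (X i ^ 2) * Polynomial.X) ^ E i := by
  rw [JqT, aeval_monomial, Finsupp.prod_fintype _ _ fun _ => pow_zero _]
  rfl

theorem jq_monomial (R : Type) [CommRing R] (n k : ℕ) (E : Fin n →₀ ℕ) (c : R) :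
    Jq R n k (monomial E c) = ∑ d ∈ Finset.univ.finsuppAntidiag k,
      monomial (E + d) (c * ∏ i, ((E i).choose (d i) : R)) := by
  classical
  change (JqT R n (monomial E c)).coeff k = _
  rw [jqT_monomial, Polynomial.coeff_C_mul, Polynomial.coeff_prod_eq_sum_finsuppAntidiag,
    Finset.mul_sum]
  refine Finset.sum_congr rfl fun d _ => ?_
  simp only [Polynomial.coeff_C_add_C_sq_mul_X_pow, Finset.prod_mul_distrib,
    monomial_eq_C_mul_prod_X_pow, map_mul, map_prod, map_natCast, Finsupp.add_apply]
  ring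

theorem exists_eq_add_of_mem_support_jq_monomial {R : Type} [CommRing R] {n k : ℕ}
    {E J : Fin n →₀ ℕ} {c : R} (hJ : J ∈ (Jq R n k (monomial E c)).support) :
    ∃ d ∈ Finset.univ.finsuppAntidiag k, J = E + d ∧ ∀ i, ((E i).choose (d i) : R) ≠ 0 := by
  classical
  rw [jq_monomial] at hJ
  obtain ⟨d, hd, hJd⟩ := Finset.mem_biUnion.mp (support_sum hJ)
  have hcoeff : c * ∏ i, ((E i).choose (d i) : R) ≠ 0 := by
    rintro h
    simp [h] at hJd
  refine ⟨d, hd, Finset.mem_singleton.mp (support_monomial_subset hJd), fun i hi => hcoeff ?_⟩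
  rw [Finset.prod_eq_zero (Finset.mem_univ i) hi, mul_zero]

theorem exists_bitPotential_lt_of_mem_support_jq {n k T : ℕ} (hk : k ≠ 0) (hkT : k < 2 ^ T)
    {g : MvPolynomial (Fin n) (ZMod 2)} {J : Fin n →₀ ℕ}
    (hJ : J ∈ (Jq (ZMod 2) n k g).support) :
    ∃ E ∈ g.support, bitPotential T J < bitPotential T E := by
  classical
  rw [g.as_sum, map_sum] at hJ
  obtain ⟨E, hE, hJE⟩ := Finset.mem_biUnion.mp (support_sum hJ)
  obtain ⟨d, hd, rfl, hodd⟩ := exists_eq_add_of_mem_support_jq_monomial hJE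
  rw [Finset.mem_finsuppAntidiag] at hd
  have hd0 : d ≠ 0 := by
    rintro rfl
    exact hk (by simpa using hd.1.symm)
  have hdk (i : Fin n) : d i ≤ k :=
    hd.1 ▸ Finset.single_le_sum (fun _ _ => Nat.zero_le _) (Finset.mem_univ i)
  exact ⟨E, hE, bitPotential_add_lt hd0 (fun i => (hdk i).trans_lt hkT)
    fun i => ZMod.natCast_ne_zero_iff_odd.mp (hodd i)⟩

theorem jq_pow_apply_eq_zero_of_bitPotential_lt {n k T : ℕ} (hk : k ≠ 0) (hkT : k < 2 ^ T)
    (N : ℕ) (g : MvPolynomial (Fin n) (ZMod 2)) (hg : ∀ E ∈ g.support, bitPotential T E < N) :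
    (Jq (ZMod 2) n k ^ N) g = 0 := by
  induction N generalizing g with
  | zero =>
    rw [← support_eq_empty, Finset.eq_empty_iff_forall_notMem]
    exact fun E hE => Nat.not_lt_zero _ (hg E hE)
  | succ N ih =>
    rw [pow_succ, Module.End.mul_apply]
    refine ih _ fun J hJ => ?_
    obtain ⟨E, hE, hlt⟩ := exists_bitPotential_lt_of_mem_support_jq hk hkT hJ
    exact hlt.trans_le (Nat.le_of_lt_succ (hg E hE))

theorem jq_zmod_two_pow_eq_zero {n k : ℕ} (hk : k ≠ 0) :
    Jq (ZMod 2) n k ^ (n * (2 ^ k - 1) + 1) = 0 :=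
  LinearMap.ext fun g => jq_pow_apply_eq_zero_of_bitPotential_lt hk Nat.lt_two_pow_self _ g
    fun E _ => Nat.lt_succ_of_le (by simpa using bitPotential_le k E)

section map

variable {R S : Type} [CommRing R] [CommRing S] (φ : R →+* S) {n : ℕ}

theorem map_jqT (f : MvPolynomial (Fin n) R) :
    Polynomial.map (map φ) (JqT R n f) = JqT S n (map φ f) := by
  have h : (Polynomial.mapRingHom (map φ)).comp (JqT R n).toRingHom =
      (JqT S n).toRingHom.comp (map φ) :=
    ringHom_ext (fun r => by simp [JqT]) (fun i => by simp [JqT])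
  exact RingHom.congr_fun h f

theorem map_jq (k : ℕ) (f : MvPolynomial (Fin n) R) :
    map φ (Jq R n k f) = Jq S n k (map φ f) := by
  change map φ ((JqT R n f).coeff k) = (JqT S n (map φ f)).coeff k
  rw [← map_jqT, Polynomial.coeff_map]

theorem map_jq_pow (k N : ℕ) (f : MvPolynomial (Fin n) R) :
    map φ ((Jq R n k ^ N) f) = (Jq S n k ^ N) (map φ f) := by
  induction N generalizing f with
  | zero => rfl
  | succ N ih => rw [pow_succ, pow_succ, Module.End.mul_apply, Module.End.mul_apply, ih, map_jq]

end map

theorem jq_power_coeffs_even_general (n : ℕ) (k : ℕ) (hk : 1 ≤ k) :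
    ∃ m : ℕ, 0 < m ∧ ∀ f : MvPolynomial (Fin n) ℤ_[2], ∀ J : Fin n →₀ ℕ,
      (2 : ℤ_[2]) ∣ coeff J
        (((Jq ℤ_[2] n k : Module.End ℤ_[2] (MvPolynomial (Fin n) ℤ_[2])) ^ m) f) := by
  refine ⟨n * (2 ^ k - 1) + 1, Nat.succ_pos _, fun f J => ?_⟩
  rw [show (2 : ℤ_[2]) = ((2 : ℕ) : ℤ_[2]) from rfl, PadicInt.dvd_iff_toZMod_eq_zero,
    ← coeff_map, map_jq_pow, jq_zmod_two_pow_eq_zero (Nat.one_le_iff_ne_zero.mp hk),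
    LinearMap.zero_apply, coeff_zero]

/-- For every `k ≥ 1` there is a positive integer `m` (the nilpotency degree of `Sq^k`)
such that the `m`-fold composite `(Jq^k)^m` maps `ℤ₂[ξ₁,…,ξₙ]` into
`2·ℤ₂[ξ₁,…,ξₙ]`, i.e. all coefficients of `(Jq^k)^m(f)` are divisible by `2`. -/
theorem jq_power_coeffs_even (n : ℕ) (hn : 1 ≤ n) (k : ℕ) (hk : 1 ≤ k) :
    ∃ m : ℕ, 0 < m ∧ ∀ f : MvPolynomial (Fin n) ℤ_[2], ∀ J : Fin n →₀ ℕ,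
      (2 : ℤ_[2]) ∣ coeff J
        (((Jq ℤ_[2] n k : Module.End ℤ_[2] (MvPolynomial (Fin n) ℤ_[2])) ^ m) f) :=
  jq_power_coeffs_even_general n k hk
end
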